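/- For r, q ≥ 3, if G is a K_{1,r}-free graph and X ⊆ V(G) induces a K_q-free subgraph, then |X| ≤ (R(r,q) - 1)·γ(G), where R(r,q) is the Ramsey number. -/

import Mathlib

open Finset

variable {V : Type*}

/-- A finset is independent in `G` : no two of its vertices are adjacent. -/
def IsIndepFinset (G : SimpleGraph V) (S : Finset V) : Prop :=
  ∀ u ∈ S, ∀ v ∈ S, ¬ G.Adj u v

/-- A finset dominates `G` : every vertex outside it has a neighbour inside it. -/
def IsDomFinset (G : SimpleGraph V) (D : Finset V) : Prop :=
  ∀ v, v ∉ D → ∃ u ∈ D, G.Adj u v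

/-- The independence number of `G`. -/
noncomputable def indepNum [Fintype V] (G : SimpleGraph V) : ℕ :=
  sSup {n | ∃ S : Finset V, IsIndepFinset G S ∧ S.card = n}

/-- The domination number of `G`. -/
noncomputable def domNum [Fintype V] (G : SimpleGraph V) : ℕ :=
  sInf {n | ∃ D : Finset V, IsDomFinset G D ∧ D.card = n}

/-- `G` is `K_{1,r}`-free: no vertex has `r` pairwise nonadjacent neighbours. -/
def K1rFree (G : SimpleGraph V) (r : ℕ) : Prop :=
  ¬ ∃ (v : V) (A : Finset V), (∀ a ∈ A, G.Adj v a) ∧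
      (∀ a ∈ A, ∀ b ∈ A, a ≠ b → ¬ G.Adj a b) ∧ A.card = r

/-- The classical Ramsey number R(r,q): the least p such that every graph on
p vertices contains a clique of size q or an independent set of size r. -/
noncomputable def ramseyNum (r q : ℕ) : ℕ :=
  sInf {p | ∀ H : SimpleGraph (Fin p),
    (∃ T : Finset (Fin p), (∀ a ∈ T, ∀ b ∈ T, a ≠ b → H.Adj a b) ∧ T.card = q) ∨
    (∃ T : Finset (Fin p), (∀ a ∈ T, ∀ b ∈ T, ¬ H.Adj a b) ∧ T.card = r)}

/-!
Fix a minimum dominating set `D`. Every vertex of `X` lies in a closed neighbourhood `N[u]` with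
`u ∈ D`, so it suffices that `|X ∩ N[u]| < R(r,q)`. Otherwise, by Ramsey's theorem, `X ∩ N[u]`
contains a `q`-clique, which `X` does not have, or an independent set of `r ≥ 2` vertices; such a
set cannot contain `u`, so it is a `K_{1,r}` centred at `u`.
-/

namespace SimpleGraph

variable {W : Type*}

theorem comap_compl (f : V ↪ W) (G : SimpleGraph W) : (G.comap f)ᶜ = Gᶜ.comap f := by
  ext v w
  simp [compl_adj, f.injective.ne_iff]

theorem IsNClique.map_of_comap {G : SimpleGraph W} {f : V ↪ W} {n : ℕ} {s : Finset V}
    (h : (G.comap f).IsNClique n s) : G.IsNClique n (s.map f) :=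
  h.map.mono (map_comap_le f G)

end SimpleGraph

open SimpleGraph

/-- The Erdős–Szekeres recursion `R(r+1, q+1) ≤ R(r, q+1) + R(r+1, q)`. -/
def ramseyBound : ℕ → ℕ → ℕ
  | 0, _ => 0
  | _, 0 => 0
  | r + 1, q + 1 => ramseyBound r (q + 1) + ramseyBound (r + 1) q + 1

theorem exists_isNClique_or_isNIndepSet_of_ramseyBound_le [DecidableEq V] (H : SimpleGraph V)
    [DecidableRel H.Adj] (r q : ℕ) (S : Finset V) (hS : ramseyBound r q ≤ #S) :
    ∃ T ⊆ S, H.IsNClique q T ∨ H.IsNIndepSet r T := by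
  induction r, q using ramseyBound.induct generalizing S with
  | case1 q => exact ⟨∅, empty_subset S, Or.inr (by simp [← isNClique_compl])⟩
  | case2 r => exact ⟨∅, empty_subset S, Or.inl (by simp)⟩
  | case3 r q ih₁ ih₂ =>
    obtain ⟨v, hv⟩ : S.Nonempty := card_pos.1 (by simp only [ramseyBound] at hS; omega)
    set A := (S.erase v).filter (H.Adj v)
    set B := (S.erase v).filter (¬ H.Adj v ·)
    have hAB : #A + #B = #S - 1 := by
      rw [card_filter_add_card_filter_not, card_erase_of_mem hv]
    have hAS : A ⊆ S := (filter_subset _ _).trans (erase_subset _ _)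
    have hBS : B ⊆ S := (filter_subset _ _).trans (erase_subset _ _)
    by_cases hA : ramseyBound (r + 1) q ≤ #A
    · obtain ⟨T, hTA, hT | hT⟩ := ih₂ A hA
      · have hvT : ∀ b ∈ T, H.Adj v b := fun b hb => (mem_filter.1 (hTA hb)).2
        exact ⟨insert v T, insert_subset hv (hTA.trans hAS), Or.inl (hT.insert hvT)⟩
      · exact ⟨T, hTA.trans hAS, Or.inr hT⟩
    · obtain ⟨T, hTB, hT | hT⟩ := ih₁ B (by simp only [ramseyBound] at hS; omega)
      · exact ⟨T, hTB.trans hBS, Or.inl hT⟩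
      · have hvT : ∀ b ∈ T, Hᶜ.Adj v b := fun b hb => by
          obtain ⟨hbS, hvb⟩ := mem_filter.1 (hTB hb)
          exact (compl_adj H v b).2 ⟨(ne_of_mem_erase hbS).symm, hvb⟩
        refine ⟨insert v T, insert_subset hv (hTB.trans hBS), Or.inr ?_⟩
        exact (isNClique_compl _).1 (((isNClique_compl _).2 hT).insert hvT)

/-- The property of `p` whose least instance is `ramseyNum r q`. -/
def IsRamseyBound (r q p : ℕ) : Prop :=
  ∀ H : SimpleGraph (Fin p),
    (∃ T : Finset (Fin p), (∀ a ∈ T, ∀ b ∈ T, a ≠ b → H.Adj a b) ∧ T.card = q) ∨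
    (∃ T : Finset (Fin p), (∀ a ∈ T, ∀ b ∈ T, ¬ H.Adj a b) ∧ T.card = r)

theorem isRamseyBound_iff {r q p : ℕ} : IsRamseyBound r q p ↔
    ∀ H : SimpleGraph (Fin p), (∃ T, H.IsNClique q T) ∨ ∃ T, H.IsNIndepSet r T := by
  refine forall_congr' fun H => or_congr ?_ ?_
  · exact exists_congr fun T => ⟨fun ⟨h, hc⟩ => ⟨h, hc⟩, fun ⟨h, hc⟩ => ⟨h, hc⟩⟩
  · refine exists_congr fun T => ⟨fun ⟨h, hc⟩ => ⟨fun a ha b hb _ => h a ha b hb, hc⟩, ?_⟩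
    rintro ⟨h, hc⟩
    refine ⟨fun a ha b hb hab => ?_, hc⟩
    obtain rfl | hne := eq_or_ne a b
    · exact H.loopless.irrefl a hab
    · exact h ha hb hne hab

theorem isRamseyBound_ramseyBound (r q : ℕ) : IsRamseyBound r q (ramseyBound r q) := by
  classical
  refine isRamseyBound_iff.2 fun H => ?_
  obtain ⟨T, -, hT | hT⟩ :=
    exists_isNClique_or_isNIndepSet_of_ramseyBound_le H r q univ (by simp)
  exacts [Or.inl ⟨T, hT⟩, Or.inr ⟨T, hT⟩]

theorem isRamseyBound_ramseyNum (r q : ℕ) : IsRamseyBound r q (ramseyNum r q) :=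
  Nat.sInf_mem (s := {p | IsRamseyBound r q p}) ⟨_, isRamseyBound_ramseyBound r q⟩

theorem IsRamseyBound.exists_subset {r q p : ℕ} (h : IsRamseyBound r q p) (G : SimpleGraph V)
    (S : Finset V) (hS : p ≤ #S) : ∃ T ⊆ S, G.IsNClique q T ∨ G.IsNIndepSet r T := by
  obtain ⟨e⟩ : Nonempty (Fin p ↪ S) := Function.Embedding.nonempty_of_card_le (by simpa using hS)
  set f := e.trans (Function.Embedding.subtype (· ∈ S))
  have hfS : ∀ T : Finset (Fin p), T.map f ⊆ S := fun T x hx => by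
    obtain ⟨i, -, rfl⟩ := mem_map.1 hx
    exact (e i).2
  obtain ⟨T, hT⟩ | ⟨T, hT⟩ := isRamseyBound_iff.1 h (G.comap f)
  · exact ⟨T.map f, hfS T, Or.inl hT.map_of_comap⟩
  · rw [← isNClique_compl, comap_compl] at hT
    exact ⟨T.map f, hfS T, Or.inr ((isNClique_compl _).1 hT.map_of_comap)⟩

theorem K1rFree.not_isNIndepSet_of_subset_insert_neighborFinset [Fintype V] [DecidableEq V]
    {G : SimpleGraph V} [DecidableRel G.Adj] {r : ℕ} (hG : K1rFree G r) (hr : 2 ≤ r) {u : V}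
    {T : Finset V} (hTu : T ⊆ insert u (G.neighborFinset u)) : ¬ G.IsNIndepSet r T := by
  intro hT
  have hTu' : ∀ a ∈ T, a ≠ u → G.Adj u a := fun a ha hau => by
    simpa [hau] using hTu ha
  by_cases hu : u ∈ T
  · -- a second vertex of `T` is a neighbour of `u`
    obtain ⟨a, ha, hau⟩ := exists_mem_ne (hT.card_eq ▸ hr) u
    exact hT.isIndepSet hu ha hau.symm (hTu' a ha hau)
  · exact hG ⟨u, T, fun a ha => hTu' a ha (ne_of_mem_of_not_mem ha hu),
      fun a ha b hb hab => hT.isIndepSet ha hb hab, hT.card_eq⟩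

theorem exists_isDomFinset_card_eq_domNum [Fintype V] (G : SimpleGraph V) :
    ∃ D, IsDomFinset G D ∧ #D = domNum G :=
  Nat.sInf_mem (s := {n | ∃ D, IsDomFinset G D ∧ #D = n}) ⟨_, univ, fun v hv => absurd (mem_univ v) hv, rfl⟩

theorem IsDomFinset.card_le_mul [Fintype V] [DecidableEq V] {G : SimpleGraph V}
    [DecidableRel G.Adj] {D : Finset V} (hD : IsDomFinset G D) (X : Finset V) {m : ℕ}
    (hm : ∀ u, #(X ∩ insert u (G.neighborFinset u)) ≤ m) : #X ≤ m * #D := by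
  have hcover : X ⊆ D.biUnion fun u => X ∩ insert u (G.neighborFinset u) := fun x hx => by
    rw [mem_biUnion]
    by_cases hxD : x ∈ D
    · exact ⟨x, hxD, mem_inter.2 ⟨hx, mem_insert_self _ _⟩⟩
    · obtain ⟨u, hu, hux⟩ := hD x hxD
      exact ⟨u, hu, mem_inter.2 ⟨hx, mem_insert_of_mem ((mem_neighborFinset _ _ _).2 hux)⟩⟩
  calc #X ≤ ∑ u ∈ D, #(X ∩ insert u (G.neighborFinset u)) :=
        (card_le_card hcover).trans card_biUnion_le
    _ ≤ ∑ _u ∈ D, m := sum_le_sum fun u _ => hm u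
    _ = m * #D := by rw [sum_const, smul_eq_mul, mul_comm]

theorem stmt15_general [Fintype V] (G : SimpleGraph V) (r q : ℕ) (hr : 3 ≤ r)
    (hG : K1rFree G r) (X : Finset V)
    (hX : ¬ ∃ T : Finset V, T ⊆ X ∧ (∀ a ∈ T, ∀ b ∈ T, a ≠ b → G.Adj a b) ∧ T.card = q) :
    X.card ≤ (ramseyNum r q - 1) * domNum G := by
  classical
  obtain ⟨D, hD, hDcard⟩ := exists_isDomFinset_card_eq_domNum G
  rw [← hDcard]
  refine hD.card_le_mul X fun u => Nat.le_sub_one_of_lt (not_le.1 fun hle => ?_)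
  obtain ⟨T, hTX, hT | hT⟩ := (isRamseyBound_ramseyNum r q).exists_subset G _ hle
  · exact hX ⟨T, hTX.trans inter_subset_left, hT.isClique, hT.card_eq⟩
  · exact hG.not_isNIndepSet_of_subset_insert_neighborFinset (by omega)
      (hTX.trans inter_subset_right) hT

/-- For r, q ≥ 3, in a K_{1,r}-free graph a vertex set inducing a K_q-free
subgraph has size at most (R(r,q)-1)·γ(G). -/
theorem stmt15 [Fintype V] (G : SimpleGraph V) (r q : ℕ) (hr : 3 ≤ r) (hq : 3 ≤ q)
    (hG : K1rFree G r) (X : Finset V)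
    (hX : ¬ ∃ T : Finset V, T ⊆ X ∧ (∀ a ∈ T, ∀ b ∈ T, a ≠ b → G.Adj a b) ∧ T.card = q) :
    X.card ≤ (ramseyNum r q - 1) * domNum G :=
  stmt15_general G r q hr hG X hX
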